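/- arXiv:1804.10144 — 4 statements merged into one kernel-verified Lean document; each statement's English description precedes it below -/
import Mathlib

section
/- For nonnegative integers r, s, k, n with n ≥ r, the γ-connection coefficients can be expressed in terms of the b-connection coefficients by γ_{n−r,k}^{(r,s)} = Σ_{σ=0}^{n−(r+k)} [b_{σ+k+s, k+s}/(σ+k+s)!] · (d^{r+k+σ} P_n/dx^{r+k+σ})(−a). -/
/-!
Expand `f = d^r P_n` by Taylor's formula at `-a` in powers of `X + a`. Differentiating the defining
expansion of `(X + a)^(m+s)` `s` times expands `(X + a)^m` in the basis `d^s P_{j+s}`, the terms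
with `j < s` dying because `deg P_j < s`. Substituting and regrouping the double sum along
`m = j + σ` expands `f` in that basis, and the coefficients of such an expansion are unique since
`d^s P_{j+s}` has degree exactly `j`.
-/

open Polynomial Finset Nat

namespace Polynomial

theorem degree_iterate_derivative_of_degree_eq {R : Type*} [Semiring R] [IsAddTorsionFree R]
    {p : R[X]} {d : ℕ} (hd : p.degree = d) {s : ℕ} (hs : s ≤ d) :
    (derivative^[s] p).degree = ↑(d - s) := by
  induction s with
  | zero => simpa using hd
  | succ t ih =>
    have hnat : (derivative^[t] p).natDegree = d - t :=
      natDegree_eq_of_degree_eq_some (ih (by omega))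
    rw [Function.iterate_succ_apply', degree_derivative (by omega), hnat]
    congr 1

theorem Sequence.eq_of_sum_C_mul_eq {R : Type*} [CommRing R] [IsDomain R] (S : Sequence R)
    {M : ℕ} {u v : ℕ → R}
    (h : ∑ j ∈ range (M + 1), C (u j) * S j = ∑ j ∈ range (M + 1), C (v j) * S j)
    {j : ℕ} (hj : j ≤ M) : u j = v j := by
  simp only [← smul_eq_C_mul] at h
  exact linearIndependent_iff'ₛ.mp S.linearIndependent _ u v h j (mem_range.mpr (by omega))

variable {K : Type*} [Field K] [CharZero K]

theorem eq_sum_range_iterate_derivative_eval_div_factorial_mul_X_add_C_pow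
    {f : K[X]} {M : ℕ} (hf : f.natDegree ≤ M) (c : K) :
    f = ∑ m ∈ range (M + 1), C ((derivative^[m] f).eval (-c) / m !) * (X + C c) ^ m := by
  conv_lhs => rw [← sum_taylor_eq f (-c)]
  rw [sum_over_range' _ (fun _ => by simp) (M + 1) (by rw [natDegree_taylor]; omega)]
  refine sum_congr rfl fun m _ => ?_
  have hfac : (m ! : K) * (hasseDeriv m f).eval (-c) = (derivative^[m] f).eval (-c) := by
    rw [← factorial_smul_hasseDeriv, LinearMap.smul_apply, nsmul_eq_mul, eval_mul, eval_natCast]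
  rw [taylor_coeff, ← hfac, mul_div_cancel_left₀ _ (Nat.cast_ne_zero.mpr m.factorial_ne_zero),
    C_neg, sub_neg_eq_add]

theorem X_add_C_pow_eq_sum_iterate_derivative {P : ℕ → K[X]} (hP : ∀ k, (P k).natDegree ≤ k)
    {c : K} {b : ℕ → ℕ → K} (hb : ∀ N, (X + C c) ^ N = ∑ k ∈ range (N + 1), C (b N k) * P k)
    (s m : ℕ) :
    (X + C c) ^ m = ∑ j ∈ range (m + 1),
      C (m ! * b (m + s) (j + s) / (m + s) !) * derivative^[s] (P (j + s)) := by
  have hdiff : (m + s).descFactorial s • (X + C c) ^ m =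
      ∑ j ∈ range (m + 1), C (b (m + s) (j + s)) * derivative^[s] (P (j + s)) := by
    have h := congrArg (derivative^[s]) (hb (m + s))
    rw [iterate_derivative_X_add_pow, Nat.add_sub_cancel, iterate_derivative_sum,
      show m + s + 1 = s + (m + 1) by omega, sum_range_add,
      sum_eq_zero fun j hj => by
        rw [iterate_derivative_C_mul, iterate_derivative_eq_zero
          ((hP j).trans_lt (mem_range.mp hj)), mul_zero], zero_add] at h
    simpa only [iterate_derivative_C_mul, add_comm s] using h
  have hfac : (m + s) ! = m ! * (m + s).descFactorial s := by
    simpa using (factorial_mul_descFactorial (Nat.le_add_left s m)).symm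
  have hd : ((m + s).descFactorial s : K) ≠ 0 :=
    Nat.cast_ne_zero.mpr (descFactorial_pos.mpr (Nat.le_add_left s m)).ne'
  calc (X + C c) ^ m
      = C ((m + s).descFactorial s : K)⁻¹ * ((m + s).descFactorial s • (X + C c) ^ m) := by
        rw [nsmul_eq_mul, ← C_eq_natCast, ← mul_assoc, ← C_mul, inv_mul_cancel₀ hd, C_1,
          one_mul]
    _ = _ := by
        rw [hdiff, mul_sum]
        refine sum_congr rfl fun j _ => ?_
        rw [← mul_assoc, ← C_mul, hfac, cast_mul,
          mul_div_mul_left _ _ (cast_ne_zero.mpr m.factorial_ne_zero), div_eq_inv_mul]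

theorem eq_sum_C_mul_iterate_derivative_of_natDegree_le {P : ℕ → K[X]}
    (hP : ∀ k, (P k).natDegree ≤ k) {c : K} {b : ℕ → ℕ → K}
    (hb : ∀ N, (X + C c) ^ N = ∑ k ∈ range (N + 1), C (b N k) * P k) (s : ℕ)
    {f : K[X]} {M : ℕ} (hf : f.natDegree ≤ M) :
    f = ∑ j ∈ range (M + 1),
      C (∑ σ ∈ range (M - j + 1),
        b (σ + j + s) (j + s) / (σ + j + s) ! * (derivative^[j + σ] f).eval (-c)) *
        derivative^[s] (P (j + s)) := by
  set t : ℕ → K := fun m => (derivative^[m] f).eval (-c) / m ! with ht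
  set Q : ℕ → K[X] := fun j => derivative^[s] (P (j + s)) with hQ
  set u : ℕ → ℕ → K := fun m j => t m * (m ! * b (m + s) (j + s) / (m + s) !) with hu
  calc f = ∑ m ∈ range (M + 1), C (t m) * (X + C c) ^ m :=
        eq_sum_range_iterate_derivative_eval_div_factorial_mul_X_add_C_pow hf c
    _ = ∑ m ∈ range (M + 1), ∑ j ∈ range (m + 1), C (u m j) * Q j := by
        refine sum_congr rfl fun m _ => ?_
        rw [X_add_C_pow_eq_sum_iterate_derivative hP hb s m, mul_sum]
        simp only [hu, hQ, C_mul, mul_assoc]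
    _ = ∑ j ∈ range (M + 1), ∑ σ ∈ range (M + 1 - j), C (u (j + σ) j) * Q j := by
        rw [← sum_range_diag_flip]
        refine sum_congr rfl fun m _ => sum_congr rfl fun j hj => ?_
        rw [Nat.add_sub_cancel' (mem_range_succ_iff.mp hj)]
    _ = _ := by
        refine sum_congr rfl fun j hj => ?_
        rw [Nat.sub_add_comm (mem_range_succ_iff.mp hj), ← sum_mul, ← map_sum]
        congr 2
        refine sum_congr rfl fun σ _ => ?_
        have hm : ((j + σ) ! : K) ≠ 0 := cast_ne_zero.mpr (factorial_ne_zero _)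
        have hms : ((j + σ + s) ! : K) ≠ 0 := cast_ne_zero.mpr (factorial_ne_zero _)
        rw [add_comm σ j]
        simp only [hu, ht]
        field_simp

end Polynomial

/-- **Lemma (γ-coefficients in terms of b-coefficients).**
Let `P k` be a polynomial sequence with `deg P k = k` and `a` a real constant.  Let `b N k`
be the connection coefficients of `(x+a)^N` in the basis `P k`, and for fixed `r, s` let
`γ (N - r) k` be the connection coefficients of `d^r P_N / dx^r` in the basis
`d^s P_{k+s} / dx^s`.  Then for `n ≥ r` and `k ≤ n - r`,
`γ (n-r) k = ∑_{σ=0}^{n-(r+k)} b_{σ+k+s, k+s} / (σ+k+s)! · (d^{r+k+σ} P_n/dx^{r+k+σ})(-a)`. -/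
theorem stmt1
    (P : ℕ → Polynomial ℂ) (hP : ∀ k, (P k).degree = (k : WithBot ℕ))
    (a : ℝ) (r s : ℕ)
    (b : ℕ → ℕ → ℂ)
    (hb : ∀ N, (Polynomial.X + Polynomial.C (a : ℂ)) ^ N =
      ∑ k ∈ Finset.range (N + 1), Polynomial.C (b N k) * P k)
    (γ : ℕ → ℕ → ℂ)
    (hγ : ∀ N, r ≤ N → Polynomial.derivative^[r] (P N) =
      ∑ k ∈ Finset.range (N - r + 1),
        Polynomial.C (γ (N - r) k) * Polynomial.derivative^[s] (P (k + s)))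
    (n k : ℕ) (hn : r ≤ n) (hk : k ≤ n - r) :
    γ (n - r) k = ∑ σ ∈ Finset.range (n - (r + k) + 1),
      b (σ + k + s) (k + s) / ((σ + k + s).factorial : ℂ) *
        (Polynomial.derivative^[r + k + σ] (P n)).eval (-(a : ℂ)) := by
  have hPnat : ∀ k, (P k).natDegree = k := fun k => natDegree_eq_of_degree_eq_some (hP k)
  let S : Sequence ℂ := ⟨fun j => derivative^[s] (P (j + s)), fun j => by
    simpa using degree_iterate_derivative_of_degree_eq (hP (j + s)) (Nat.le_add_left s j)⟩
  have hdeg : (derivative^[r] (P n)).natDegree ≤ n - r := by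
    simpa only [hPnat] using natDegree_iterate_derivative (P n) r
  have hγk := S.eq_of_sum_C_mul_eq ((hγ n hn).symm.trans
    (eq_sum_C_mul_iterate_derivative_of_natDegree_le (fun k => (hPnat k).le) hb s hdeg)) hk
  rw [hγk, show n - (r + k) = n - r - k by omega]
  refine sum_congr rfl fun σ _ => ?_
  rw [← Function.iterate_add_apply, add_comm (k + σ) r, ← add_assoc]
end

section
/- For nonnegative integers m, n and 0 ≤ j ≤ m+n+1, the convolution coefficients are given by ρ_{j,n}^m = Σ_{p=j}^{m+n+1} (b_{p,j}/p!) Σ_{ν=1}^{p} (d^{p−ν} P_m/dx^{p−ν})(−a) · (d^{ν−1} P_n/dx^{ν−1})(−a), where the inner sum is understood to be zero when p = 0. -/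
/-!
Expanding `P_m` and `P_n` in Taylor series about `-a` turns the convolution integral into a
combination of beta integrals `∫_{-a}^{x+a} (x + a - t)^i (t + a)^k dt
= i! k! / (i+k+1)! · (x + 2a)^(i+k+1)`. Grouping by `p = i + k + 1` shows that the integral is
the polynomial in `x + 2a` whose `p`-th coefficient is the inner sum divided by `p!`. Expanding
`(x + 2a)^p = ((x + a) + a)^p = Σ_j b_{p,j} P_j(x + a)` and comparing coefficients, which is
legitimate since the `P_j` are linearly independent and a polynomial identity on `ℝ` holds on
`ℂ`, gives the formula.
-/

open Polynomial Finset intervalIntegral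
open scoped Nat

theorem integral_sub_pow_mul_sub_pow (i k : ℕ) (c d : ℝ) :
    ∫ t in c..d, (d - t) ^ i * (t - c) ^ k
      = i ! * k ! / (i + k + 1)! * (d - c) ^ (i + k + 1) := by
  induction i generalizing k with
  | zero =>
    simp only [pow_zero, one_mul, zero_add, Nat.factorial_zero, Nat.cast_one]
    rw [integral_comp_sub_right (· ^ k), sub_self, integral_pow, Nat.factorial_succ]
    push_cast
    field_simp
    ring
  | succ i ih =>
    have hu : ∀ t ∈ Set.uIcc c d,
        HasDerivAt (fun t => (d - t) ^ (i + 1)) (-((i + 1 : ℝ) * (d - t) ^ i)) t := fun t _ => by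
      refine (((hasDerivAt_id t).const_sub d).fun_pow (i + 1)).congr_deriv ?_
      simp only [id, Nat.cast_add, Nat.cast_one, add_tsub_cancel_right]
      ring
    have hv : ∀ t ∈ Set.uIcc c d,
        HasDerivAt (fun t => (t - c) ^ (k + 1) / (k + 1 : ℝ)) ((t - c) ^ k) t := fun t _ => by
      refine ((((hasDerivAt_id t).sub_const c).fun_pow (k + 1)).div_const _).congr_deriv ?_
      simp only [id, Nat.cast_add, Nat.cast_one, add_tsub_cancel_right]
      field_simp
    -- integration by parts trades a factor `d - t` for a factor `t - c`
    rw [integral_mul_deriv_eq_deriv_mul hu hv (Continuous.intervalIntegrable (by fun_prop) _ _)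
      (Continuous.intervalIntegrable (by fun_prop) _ _)]
    have hibp : ∫ t in c..d, -((i + 1 : ℝ) * (d - t) ^ i) * ((t - c) ^ (k + 1) / (k + 1 : ℝ))
        = -((i + 1) / (k + 1) * ∫ t in c..d, (d - t) ^ i * (t - c) ^ (k + 1)) := by
      rw [← integral_const_mul, ← integral_neg]
      congr 1 with t
      ring
    rw [hibp, ih, show i + (k + 1) + 1 = i + 1 + k + 1 by ring]
    simp only [sub_self, zero_pow (Nat.succ_ne_zero _), zero_mul]
    push_cast [Nat.factorial_succ]
    field_simp
    ring

theorem Polynomial.eval_eq_sum_range_iterate_derivative {K : Type*} [Field K] [CharZero K]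
    (f : K[X]) (r z : K) :
    f.eval z = ∑ i ∈ range (f.natDegree + 1),
      (derivative^[i] f).eval r / i ! * (z - r) ^ i := by
  rw [← sub_add_cancel z r, ← taylor_eval,
    eval_eq_sum_range' (n := f.natDegree + 1) (by rw [natDegree_taylor]; omega),
    add_sub_cancel_right]
  refine sum_congr rfl fun i _ => ?_
  have h := congrArg (eval r) (congrFun (factorial_smul_hasseDeriv (R := K) (k := i)) f)
  rw [LinearMap.smul_apply, eval_smul, nsmul_eq_mul] at h
  rw [taylor_coeff, ← h, mul_div_cancel_left₀ _ (Nat.cast_ne_zero.mpr i.factorial_ne_zero)]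

theorem Finset.sum_range_sum_range_eq_sum_range_sum_Icc {M : Type*} [AddCommMonoid M] {m n : ℕ}
    (g : ℕ → ℕ → M) (hgm : ∀ i k, m < i → g i k = 0) (hgn : ∀ i k, n < k → g i k = 0) :
    ∑ i ∈ range (m + 1), ∑ k ∈ range (n + 1), g i k
      = ∑ p ∈ range (m + n + 2), ∑ ν ∈ Icc 1 p, g (p - ν) (ν - 1) := by
  set T := (range (m + n + 1) ×ˢ range (m + n + 1)).filter fun q => q.1 + q.2 ≤ m + n
  calc ∑ i ∈ range (m + 1), ∑ k ∈ range (n + 1), g i k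
      = ∑ q ∈ range (m + 1) ×ˢ range (n + 1), g q.1 q.2 := (sum_product' _ _ _).symm
    _ = ∑ q ∈ T, g q.1 q.2 := by
      refine sum_subset (fun q hq => ?_) fun q _ hq => ?_
      · simp only [T, mem_filter, mem_product, mem_range] at hq ⊢
        omega
      · simp only [mem_product, mem_range, not_and_or, not_lt] at hq
        rcases hq with hq | hq
        exacts [hgm _ _ hq, hgn _ _ hq]
    _ = ∑ p ∈ range (m + n + 2), ∑ ν ∈ Icc 1 p, g (p - ν) (ν - 1) := by
      rw [sum_sigma']
      refine sum_nbij' (fun q => ⟨q.1 + q.2 + 1, q.2 + 1⟩) (fun x => (x.1 - x.2, x.2 - 1))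
        ?_ ?_ ?_ ?_ fun q _ => by simp
      all_goals
        simp only [T, Prod.forall, Sigma.forall, mem_filter, mem_product, mem_range, mem_sigma,
          mem_Icc, Prod.mk.injEq, Sigma.mk.injEq, heq_eq_eq]
        omega

theorem integral_eval_sub_mul_eval_eq_sum (f g : ℂ[X]) (c d : ℝ) :
    ∫ t in c..d, f.eval ((c + d - t : ℝ) : ℂ) * g.eval (t : ℂ)
      = ∑ i ∈ range (f.natDegree + 1), ∑ k ∈ range (g.natDegree + 1),
          (derivative^[i] f).eval (c : ℂ) * (derivative^[k] g).eval (c : ℂ) / (i + k + 1)!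
            * ((d - c : ℝ) : ℂ) ^ (i + k + 1) := by
  have htaylor : ∀ t : ℝ, f.eval ((c + d - t : ℝ) : ℂ) * g.eval (t : ℂ)
      = ∑ i ∈ range (f.natDegree + 1), ∑ k ∈ range (g.natDegree + 1),
          (derivative^[i] f).eval (c : ℂ) / i ! * ((derivative^[k] g).eval (c : ℂ) / k !)
            * (((d - t) ^ i * (t - c) ^ k : ℝ) : ℂ) := fun t => by
    rw [eval_eq_sum_range_iterate_derivative f c, eval_eq_sum_range_iterate_derivative g c,
      sum_mul_sum]
    push_cast
    refine sum_congr rfl fun i _ => sum_congr rfl fun k _ => by ring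
  simp_rw [htaylor]
  rw [integral_finsetSum fun i _ => Continuous.intervalIntegrable (by fun_prop) _ _]
  refine sum_congr rfl fun i _ => ?_
  rw [integral_finsetSum fun k _ => Continuous.intervalIntegrable (by fun_prop) _ _]
  refine sum_congr rfl fun k _ => ?_
  rw [integral_const_mul, integral_ofReal, integral_sub_pow_mul_sub_pow]
  have := i.factorial_ne_zero
  have := k.factorial_ne_zero
  push_cast
  field_simp

theorem integral_eval_sub_mul_eval_eq_sum_Icc (f g : ℂ[X]) (c d : ℝ) :
    ∫ t in c..d, f.eval ((c + d - t : ℝ) : ℂ) * g.eval (t : ℂ)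
      = ∑ p ∈ range (f.natDegree + g.natDegree + 2),
          (∑ ν ∈ Icc 1 p, (derivative^[p - ν] f).eval (c : ℂ) *
            (derivative^[ν - 1] g).eval (c : ℂ)) / p ! * ((d - c : ℝ) : ℂ) ^ p := by
  have hvanish {h : ℂ[X]} {i : ℕ} (hi : h.natDegree < i) :
      (derivative^[i] h).eval (c : ℂ) = 0 := by
    rw [iterate_derivative_eq_zero hi, eval_zero]
  rw [integral_eval_sub_mul_eval_eq_sum, sum_range_sum_range_eq_sum_range_sum_Icc _
    (fun i k hi => by rw [hvanish hi, zero_mul, zero_div, zero_mul])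
    (fun i k hk => by rw [hvanish hk, mul_zero, zero_div, zero_mul])]
  refine sum_congr rfl fun p _ => ?_
  rw [sum_div, sum_mul]
  refine sum_congr rfl fun ν hν => ?_
  rw [show p - ν + (ν - 1) + 1 = p by simp only [mem_Icc] at hν; omega]

theorem Polynomial.Sequence.eq_of_sum_C_mul_eq_s3 {R : Type*} [CommRing R] [IsDomain R]
    (S : Sequence R) {N : ℕ} {c c' : ℕ → R}
    (h : ∑ l ∈ range N, C (c l) * S l = ∑ l ∈ range N, C (c' l) * S l) {l : ℕ} (hl : l < N) :
    c l = c' l := by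
  simp only [← smul_eq_C_mul] at h
  exact linearIndependent_iff'ₛ.mp S.linearIndependent _ _ _ h l (mem_range.mpr hl)

/-- **Theorem (first form of the convolution coefficients).**
Let `P k` be a polynomial sequence with `deg P k = k`, `a` a real constant, `b N k` the
connection coefficients of `(x+a)^N` in the basis `P k`, and `ρ j` the coefficients of the
expansion of `∫_{-a}^{x+a} P_m(x-t) P_n(t) dt` in the basis `P j (x+a)`.  Then for
`0 ≤ j ≤ m+n+1`,
`ρ j = ∑_{p=j}^{m+n+1} (b_{p,j}/p!) ∑_{ν=1}^{p} (d^{p-ν}P_m/dx^{p-ν})(-a) ·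
  (d^{ν-1}P_n/dx^{ν-1})(-a)` (inner sum empty when `p = 0`). -/
theorem stmt3
    (P : ℕ → Polynomial ℂ) (hP : ∀ k, (P k).degree = (k : WithBot ℕ))
    (a : ℝ)
    (b : ℕ → ℕ → ℂ)
    (hb : ∀ N, (Polynomial.X + Polynomial.C (a : ℂ)) ^ N =
      ∑ k ∈ Finset.range (N + 1), Polynomial.C (b N k) * P k)
    (m n : ℕ) (ρ : ℕ → ℂ)
    (hρ : ∀ x : ℝ,
      (∫ t in (-a)..(x + a), (P m).eval ((x : ℂ) - (t : ℂ)) * (P n).eval (t : ℂ)) =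
        ∑ j ∈ Finset.range (m + n + 2), ρ j * (P j).eval ((x : ℂ) + (a : ℂ)))
    (j : ℕ) (hj : j ≤ m + n + 1) :
    ρ j = ∑ p ∈ Finset.Icc j (m + n + 1),
      b p j / (p.factorial : ℂ) *
        ∑ ν ∈ Finset.Icc 1 p,
          (Polynomial.derivative^[p - ν] (P m)).eval (-(a : ℂ)) *
            (Polynomial.derivative^[ν - 1] (P n)).eval (-(a : ℂ)) := by
  let Pseq : Sequence ℂ := ⟨P, hP⟩
  have hnd : ∀ k, (P k).natDegree = k := Pseq.natDegree_eq
  set S : ℕ → ℂ := fun p => ∑ ν ∈ Icc 1 p,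
    (derivative^[p - ν] (P m)).eval (-(a : ℂ)) * (derivative^[ν - 1] (P n)).eval (-(a : ℂ))
  set ρ' : ℕ → ℂ := fun l => ∑ p ∈ Icc l (m + n + 1), b p l / p ! * S p
  have hexpand (y : ℂ) (p : ℕ) : (y + a) ^ p = ∑ l ∈ range (p + 1), b p l * (P l).eval y := by
    simpa [eval_finsetSum] using congrArg (eval y) (hb p)
  have hcoeff (x : ℝ) : ∑ l ∈ range (m + n + 2), ρ l * (P l).eval ((x : ℂ) + a)
      = ∑ l ∈ range (m + n + 2), ρ' l * (P l).eval ((x : ℂ) + a) := by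
    have hconv := integral_eval_sub_mul_eval_eq_sum_Icc (P m) (P n) (-a) (x + a)
    simp only [hnd, show ∀ t : ℝ, -a + (x + a) - t = x - t by intro; ring,
      show x + a - -a = x + a + a by ring, Complex.ofReal_sub, Complex.ofReal_add,
      Complex.ofReal_neg, hexpand] at hconv
    rw [← hρ, hconv]
    simp_rw [mul_sum, range_eq_Ico]
    rw [← sum_Ico_Ico_comm]
    refine sum_congr rfl fun l _ => ?_
    rw [show m + n + 2 = m + n + 1 + 1 from rfl, Ico_add_one_right_eq_Icc, sum_mul]
    exact sum_congr rfl fun p _ => by ring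
  have hpoly :
      ∑ l ∈ range (m + n + 2), C (ρ l) * P l = ∑ l ∈ range (m + n + 2), C (ρ' l) * P l := by
    refine eq_of_infinite_eval_eq _ _ (Set.infinite_range_of_injective Complex.ofReal_injective
      |>.mono ?_)
    rintro _ ⟨y, rfl⟩
    simpa [eval_finsetSum] using hcoeff (y - a)
  exact Pseq.eq_of_sum_C_mul_eq_s3 hpoly (by omega)
end

section
/- For nonnegative integers m, n and any j with m+1 ≤ j ≤ m+n+1, the convolution coefficients are given by ρ_{j,n}^m = Σ_{ν=max(1, j−n)}^{m+1} γ_{n−j+ν,0}^{(j−ν, j)} · (d^{ν−1} P_m/dx^{ν−1})(−a). -/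
/-!
Integrating by parts `m + 1` times expresses `∫_{-a}^{x+a} P_m(x - t) P_n(t) dt`, as a polynomial
in `y = x + a`, as `∑_{ν=1}^{m+1} (P_m^{(ν-1)}(-a) Q_ν(y) - Q_ν(-a) P_m^{(ν-1)}(y))`, where `Q_ν`
is a `ν`-fold antiderivative of `P_n`. Differentiating `j ≥ m + 1` times kills the second half and
turns `Q_ν` into `P_n^{(j-ν)}`, so `∑_k ρ_k P_k^{(j)} = ∑_ν P_m^{(ν-1)}(-a) P_n^{(j-ν)}`. Now take the
coordinate of index `0` in the basis `(P_{k+j}^{(j)})_k`: on the left only `k = j` contributes, and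
on the right the coordinate of `P_n^{(j-ν)}` is `γ_{n-j+ν,0}^{(j-ν,j)}`, or `0` when `j - ν > n`.
-/

open Polynomial

theorem Module.Basis.repr_sum_C_mul {ι α R : Type*} [Semiring R] (b : Module.Basis ι R R[X])
    (s : Finset α) (c : α → R) (f : α → R[X]) (i : ι) :
    b.repr (∑ x ∈ s, C (c x) * f x) i = ∑ x ∈ s, c x * b.repr (f x) i := by
  simp [← smul_eq_C_mul]

namespace Polynomial

section Antiderivative

variable {K : Type*} [Field K] [CharZero K]

noncomputable def antideriv (q : K[X]) : K[X] :=
  q.sum fun r c => C (c / (r + 1)) * X ^ (r + 1)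

theorem derivative_antideriv (q : K[X]) : derivative (antideriv q) = q := by
  rw [antideriv, Polynomial.sum, map_sum]
  conv_rhs => rw [← q.sum_C_mul_X_pow_eq, Polynomial.sum]
  refine Finset.sum_congr rfl fun r _ => ?_
  rw [derivative_C_mul_X_pow, Nat.add_sub_cancel, Nat.cast_add_one,
    div_mul_cancel₀ _ (Nat.cast_add_one_ne_zero r)]

theorem iterate_derivative_iterate_antideriv {ν j : ℕ} (h : ν ≤ j) (q : K[X]) :
    derivative^[j] (antideriv^[ν] q) = derivative^[j - ν] q := by
  obtain ⟨d, rfl⟩ := Nat.exists_eq_add_of_le h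
  rw [Nat.add_sub_cancel_left, add_comm, Function.iterate_add_apply,
    (Function.LeftInverse.iterate derivative_antideriv ν) q]

end Antiderivative

theorem degree_iterate_derivative {R : Type*} [Semiring R] [IsAddTorsionFree R] {p : R[X]}
    {c : ℕ} (ℓ : ℕ) (h : p.degree = (c + ℓ : ℕ)) : (derivative^[ℓ] p).degree = c := by
  induction ℓ generalizing p with
  | zero => simpa using h
  | succ ℓ ih =>
    have hp : p.natDegree = c + ℓ + 1 := natDegree_eq_of_degree_eq_some h
    rw [Function.iterate_succ_apply]
    exact ih (by rw [degree_derivative (by omega), hp, Nat.add_sub_cancel])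

namespace Sequence

noncomputable def iterateDerivative {R : Type*} [Semiring R] [IsAddTorsionFree R] (S : Sequence R)
    (j : ℕ) : Sequence R where
  elems' k := derivative^[j] (S (k + j))
  degree_eq' k := degree_iterate_derivative j (S.degree_eq (k + j))

variable {K : Type*} [Field K]

noncomputable def basisOfField (S : Sequence K) : Module.Basis ℕ K K[X] :=
  S.basis fun i => (leadingCoeff_ne_zero.mpr (S.ne_zero i)).isUnit

theorem basisOfField_apply (S : Sequence K) (i : ℕ) : S.basisOfField i = S i :=
  S.basis_eq_self _ i

theorem iterateDerivative_basisOfField_apply [CharZero K] (S : Sequence K) (j k : ℕ) :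
    (S.iterateDerivative j).basisOfField k = derivative^[j] (S (k + j)) :=
  basisOfField_apply _ k

theorem iterateDerivative_basisOfField_repr_sum [CharZero K] (S : Sequence K) (j : ℕ)
    (c : ℕ → K) {N i : ℕ} (hi : i < N) :
    (S.iterateDerivative j).basisOfField.repr
      (∑ k ∈ Finset.range N, C (c k) * derivative^[j] (S (k + j))) i = c i := by
  rw [Module.Basis.repr_sum_C_mul]
  simp [← iterateDerivative_basisOfField_apply, Finsupp.single_apply, hi]

theorem iterateDerivative_basisOfField_repr [CharZero K] (S : Sequence K) (j k : ℕ) :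
    (S.iterateDerivative j).basisOfField.repr (derivative^[j] (S k)) 0 =
      if k = j then 1 else 0 := by
  rcases lt_or_ge k j with hk | hk
  · simp [iterate_derivative_eq_zero (by simpa using hk : (S k).natDegree < j), hk.ne]
  · obtain ⟨i, rfl⟩ := Nat.exists_eq_add_of_le' hk
    simp [← iterateDerivative_basisOfField_apply, Finsupp.single_apply]

end Sequence

section Convolution

variable {K : Type*} [Field K] [CharZero K]

noncomputable def convPrimitive (p q : K[X]) (x : K) (M : ℕ) : K[X] :=
  ∑ ν ∈ Finset.Icc 1 M, (derivative^[ν - 1] p).comp (C x - X) * antideriv^[ν] q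

theorem derivative_convPrimitive (p q : K[X]) (x : K) (M : ℕ) :
    derivative (convPrimitive p q x M) =
      p.comp (C x - X) * q - (derivative^[M] p).comp (C x - X) * antideriv^[M] q := by
  induction M with
  | zero => simp [convPrimitive]
  | succ M ih =>
    rw [convPrimitive, Finset.sum_Icc_succ_top (by omega), map_add, ← convPrimitive, ih,
      Nat.add_sub_cancel, derivative_mul, derivative_comp]
    simp only [Function.iterate_succ_apply', derivative_antideriv, derivative_sub, derivative_C,
      derivative_X]
    ring

noncomputable def convPoly (a : K) (p q : K[X]) : K[X] :=
  ∑ ν ∈ Finset.Icc 1 (p.natDegree + 1),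
    (C ((derivative^[ν - 1] p).eval (-a)) * antideriv^[ν] q -
      C ((antideriv^[ν] q).eval (-a)) * derivative^[ν - 1] p)

theorem iterate_derivative_convPoly (a : K) (p q : K[X]) {j : ℕ} (hj : p.natDegree < j) :
    derivative^[j] (convPoly a p q) = ∑ ν ∈ Finset.Icc 1 (p.natDegree + 1),
      C ((derivative^[ν - 1] p).eval (-a)) * derivative^[j - ν] q := by
  rw [convPoly, iterate_derivative_sum]
  refine Finset.sum_congr rfl fun ν hν => ?_
  have hν := Finset.mem_Icc.mp hν
  rw [iterate_derivative_sub, iterate_derivative_C_mul, iterate_derivative_C_mul,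
    iterate_derivative_iterate_antideriv (by omega), ← Function.iterate_add_apply,
    iterate_derivative_eq_zero (p := p) (x := j + (ν - 1)) (by omega), mul_zero, sub_zero]

end Convolution

theorem intervalIntegral_eval_derivative (A : ℂ[X]) (u v : ℝ) :
    ∫ t in u..v, (derivative A).eval (t : ℂ) = A.eval (v : ℂ) - A.eval (u : ℂ) :=
  intervalIntegral.integral_eq_sub_of_hasDerivAt (fun t _ => (A.hasDerivAt t).comp_ofReal)
    ((A.derivative.continuous.comp Complex.continuous_ofReal).intervalIntegrable _ _)

theorem integral_eq_eval_convPoly (a x : ℝ) (p q : ℂ[X]) :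
    ∫ t in (-a)..(x + a), p.eval ((x : ℂ) - t) * q.eval (t : ℂ) =
      (convPoly (a : ℂ) p q).eval ((x : ℂ) + a) := by
  have hprim : ∀ t : ℝ, p.eval ((x : ℂ) - t) * q.eval (t : ℂ) =
      (derivative (convPrimitive p q (x : ℂ) (p.natDegree + 1))).eval (t : ℂ) := by
    intro t
    rw [derivative_convPrimitive, iterate_derivative_eq_zero (Nat.lt_succ_self _), zero_comp,
      zero_mul, sub_zero]
    simp [eval_comp]
  rw [intervalIntegral.integral_congr fun t _ => hprim t, intervalIntegral_eval_derivative,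
    convPrimitive, convPoly, eval_finsetSum, eval_finsetSum, eval_finsetSum,
    ← Finset.sum_sub_distrib]
  refine Finset.sum_congr rfl fun ν _ => ?_
  push_cast
  simp only [eval_mul, eval_comp, eval_sub, eval_C, eval_X]
  rw [sub_add_cancel_left, sub_neg_eq_add]
  ring

theorem eq_of_forall_eval_ofReal_add (c : ℂ) {p q : ℂ[X]}
    (h : ∀ x : ℝ, p.eval ((x : ℂ) + c) = q.eval ((x : ℂ) + c)) : p = q := by
  refine eq_of_infinite_eval_eq p q (Set.Infinite.mono ?_ (Set.infinite_range_of_injective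
    ((add_left_injective c).comp Complex.ofReal_injective)))
  rintro _ ⟨x, rfl⟩
  exact h x

end Polynomial

/-- **Theorem (convolution coefficients for `j ≥ m+1`).**
Let `P k` be a polynomial sequence with `deg P k = k`, `a` a real constant,
`γ r s (N-r) k` the connection coefficients of `d^r P_N/dx^r` in the basis
`d^s P_{k+s}/dx^s`, and `ρ j` the coefficients of the expansion of
`∫_{-a}^{x+a} P_m(x-t) P_n(t) dt` in the basis `P j (x+a)`.  Then for
`m+1 ≤ j ≤ m+n+1`,
`ρ j = ∑_{ν=max(1, j-n)}^{m+1} γ_{n-j+ν,0}^{(j-ν,j)} · (d^{ν-1}P_m/dx^{ν-1})(-a)`. -/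
theorem stmt4
    (P : ℕ → Polynomial ℂ) (hP : ∀ k, (P k).degree = (k : WithBot ℕ))
    (a : ℝ)
    (γ : ℕ → ℕ → ℕ → ℕ → ℂ)
    (hγ : ∀ r s N, r ≤ N → Polynomial.derivative^[r] (P N) =
      ∑ k ∈ Finset.range (N - r + 1),
        Polynomial.C (γ r s (N - r) k) * Polynomial.derivative^[s] (P (k + s)))
    (m n : ℕ) (ρ : ℕ → ℂ)
    (hρ : ∀ x : ℝ,
      (∫ t in (-a)..(x + a), (P m).eval ((x : ℂ) - (t : ℂ)) * (P n).eval (t : ℂ)) =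
        ∑ j ∈ Finset.range (m + n + 2), ρ j * (P j).eval ((x : ℂ) + (a : ℂ)))
    (j : ℕ) (hj1 : m + 1 ≤ j) (hj2 : j ≤ m + n + 1) :
    ρ j = ∑ ν ∈ Finset.Icc (max 1 (j - n)) (m + 1),
      γ (j - ν) j (n + ν - j) 0 *
        (Polynomial.derivative^[ν - 1] (P m)).eval (-(a : ℂ)) := by
  obtain ⟨S, rfl⟩ : ∃ S : Sequence ℂ, ⇑S = P := ⟨⟨P, hP⟩, rfl⟩
  have hconv : ∑ k ∈ Finset.range (m + n + 2), C (ρ k) * S k = convPoly (a : ℂ) (S m) (S n) :=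
    eq_of_forall_eval_ofReal_add (a : ℂ) fun x => by
      simp [← integral_eq_eval_convPoly, hρ x, eval_finsetSum]
  have hderiv : ∑ k ∈ Finset.range (m + n + 2), C (ρ k) * derivative^[j] (S k) =
      ∑ ν ∈ Finset.Icc 1 (m + 1),
        C ((derivative^[ν - 1] (S m)).eval (-(a : ℂ))) * derivative^[j - ν] (S n) := by
    have h := congrArg (derivative^[j]) hconv
    rw [iterate_derivative_sum, iterate_derivative_convPoly _ _ _ (by rw [S.natDegree_eq]; omega),
      S.natDegree_eq] at h
    simpa only [iterate_derivative_C_mul] using h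
  have hcoord := congrArg (fun f => (S.iterateDerivative j).basisOfField.repr f 0) hderiv
  simp only [Module.Basis.repr_sum_C_mul, S.iterateDerivative_basisOfField_repr, mul_ite, mul_one,
    mul_zero, Finset.sum_ite_eq', if_pos (Finset.mem_range.mpr (show j < m + n + 2 by omega))]
    at hcoord
  rw [hcoord, ← Finset.sum_subset (Finset.Icc_subset_Icc_left (le_max_left 1 (j - n)))]
  · refine Finset.sum_congr rfl fun ν hν => ?_
    have hν := Finset.mem_Icc.mp hν
    rw [hγ (j - ν) j n (by omega), S.iterateDerivative_basisOfField_repr_sum j _ (Nat.succ_pos _),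
      show n - (j - ν) = n + ν - j by omega, mul_comm]
  · intro ν hν hν'
    simp only [Finset.mem_Icc] at hν hν'
    rw [iterate_derivative_eq_zero (p := S n) (by rw [S.natDegree_eq]; omega)]
    simp
end

section
/- Let α be a complex number with ℜ(α) > −1 and let m, n be positive integers with n ≥ m. If n ≥ m+1, the Laguerre convolution coefficients are ρ̂_{j,n}^{m;(α)} = −(α−1)_{m+n+1−j}/(m+n+1−j)! for n+1 ≤ j ≤ m+n+1; ρ̂_{n,n}^{m;(α)} = (α)_m/m! for j = n; ρ̂_{j,n}^{m;(α)} = 0 for m+1 ≤ j ≤ n−1 (when n ≥ m+2); ρ̂_{m,n}^{m;(α)} = (α)_{n+1}/(n+1)! for j = m; and ρ̂_{j,n}^{m;(α)} = (α−1)_{m+n+1−j}/(m+n+1−j)! for 0 ≤ j ≤ m−1. If n = m, then ρ̂_{j,m}^{m;(α)} = −(α−1)_{2m+1−j}/(2m+1−j)! for m+1 ≤ j ≤ 2m+1; ρ̂_{m,m}^{m;(α)} = (α)_{m+1}/(m+1)! + (α)_m/m!; and ρ̂_{j,m}^{m;(α)} = (α−1)_{2m+1−j}/(2m+1−j)! for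 0 ≤ j ≤ m−1. -/
/-!
Under the Laplace transform `x ^ k ↦ k! / s ^ (k + 1)` a convolution becomes a product, and in the
variable `X = 1 / s` the transform of `L_n^{(α)}` is `X · F_n(1 - X)`, where
`F_n(Y) = ∑_{i ≤ n} a_i Y ^ (n - i)` with `a_i = (α)_i / i!` the coefficients of `(1 - z) ^ (-α)`.
The theorem thus reduces to the polynomial identity
`(1 - Y) F_m F_n = ∑_{j < m} b_{m+n+1-j} F_j + a_{n+1} F_m + a_m F_n - ∑_{i ≤ m} b_i F_{m+n+1-i}`,
`b_i = (α - 1)_i / i! = a_i - a_{i-1}`, which follows by induction on `m`; the coefficients are then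
read off by linear independence of the `L_j^{(α)}`.
-/

open Polynomial

/-- Pochhammer symbol `(z)ₙ = z(z+1)⋯(z+n-1)` for a complex base. -/
noncomputable def poch (z : ℂ) (n : ℕ) : ℂ := (ascPochhammer ℂ n).eval z

/-- The Laguerre polynomial `L_n^{(α)}(x) = ((1+α)ₙ/n!) ₁F₁(-n; α+1; x)` (with the
terminating confluent hypergeometric series written out). -/
noncomputable def laguerreL (α : ℂ) (n : ℕ) : Polynomial ℂ :=
  Polynomial.C (poch (1 + α) n / (n.factorial : ℂ)) *
    ∑ k ∈ Finset.range (n + 1),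
      Polynomial.C (poch (-(n : ℂ)) k / (poch (α + 1) k * (k.factorial : ℂ))) *
        Polynomial.X ^ k

namespace LaguerreConvolution

open Nat

lemma poch_zero (z : ℂ) : poch z 0 = 1 := by simp [poch]

lemma poch_succ (z : ℂ) (n : ℕ) : poch z (n + 1) = poch z n * (z + n) :=
  ascPochhammer_succ_eval n z

lemma poch_succ_left (z : ℂ) (n : ℕ) : poch z (n + 1) = z * poch (z + 1) n := by
  simp [poch, ascPochhammer_succ_left]

lemma poch_add (z : ℂ) (a b : ℕ) : poch z (a + b) = poch z a * poch (z + a) b := by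
  simp [poch, ← ascPochhammer_mul]

lemma poch_ne_zero {z : ℂ} (hz : 0 < z.re) (n : ℕ) : poch z n ≠ 0 := by
  induction n with
  | zero => simp [poch_zero]
  | succ k ih =>
    rw [poch_succ]
    refine mul_ne_zero ih fun h => ?_
    have := congrArg Complex.re h
    simp only [Complex.add_re, Complex.natCast_re, Complex.zero_re] at this
    linarith [(k.cast_nonneg : (0 : ℝ) ≤ k)]

lemma poch_neg_natCast (n k : ℕ) : poch (-(n : ℂ)) k = (-1) ^ k * n.descFactorial k := by
  rw [poch, ascPochhammer_eval_neg_eq_descPochhammer, descPochhammer_eval_eq_descFactorial]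

/-- The coefficient of `z ^ i` in `(1 - z) ^ (-α)`. -/
noncomputable def negBinomCoeff (α : ℂ) (i : ℕ) : ℂ := poch α i / i !

@[simp]
lemma negBinomCoeff_zero (α : ℂ) : negBinomCoeff α 0 = 1 := by simp [negBinomCoeff, poch_zero]

lemma negBinomCoeff_sub_one_succ (α : ℂ) (r : ℕ) :
    negBinomCoeff (α - 1) (r + 1) = negBinomCoeff α (r + 1) - negBinomCoeff α r := by
  unfold negBinomCoeff
  rw [poch_succ_left, sub_add_cancel, poch_succ, factorial_succ]
  have := factorial_ne_zero r
  push_cast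
  field_simp
  ring

/-- `k !` times the coefficient of `X ^ k` in `laguerreL α n`, for `k ≤ n`. -/
noncomputable def laguerreCoeff (α : ℂ) (n k : ℕ) : ℂ :=
  (-1) ^ k * negBinomCoeff (α + 1 + k) (n - k)

lemma laguerreL_eq_sum {α : ℂ} (hα : -1 < α.re) (n : ℕ) :
    laguerreL α n = ∑ k ∈ Finset.range (n + 1), C (laguerreCoeff α n k / k !) * X ^ k := by
  rw [laguerreL, Finset.mul_sum]
  refine Finset.sum_congr rfl fun k hk => ?_
  obtain ⟨r, rfl⟩ := Nat.exists_eq_add_of_le (Nat.lt_succ_iff.mp (Finset.mem_range.mp hk))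
  have hdesc : ((k + r) ! : ℂ) = r ! * (k + r).descFactorial k := by
    have := factorial_mul_descFactorial (Nat.le_add_right k r)
    rw [Nat.add_sub_cancel_left] at this
    exact_mod_cast this.symm
  have hpoch : poch (α + 1) k ≠ 0 := poch_ne_zero (by simp; linarith) k
  have : ((k + r).descFactorial k : ℂ) ≠ 0 := by
    exact_mod_cast (Nat.descFactorial_pos.mpr (by omega)).ne'
  have := factorial_ne_zero k
  have := factorial_ne_zero r
  rw [← mul_assoc, ← C_mul, laguerreCoeff, negBinomCoeff, poch_neg_natCast, add_comm 1 α,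
    poch_add, hdesc, Nat.add_sub_cancel_left]
  field_simp

lemma laguerreCoeff_succ_zero (α : ℂ) (n : ℕ) :
    laguerreCoeff α (n + 1) 0 = laguerreCoeff α n 0 + negBinomCoeff α (n + 1) := by
  have := negBinomCoeff_sub_one_succ (α + 1) n
  simp only [add_sub_cancel_right] at this
  simp only [laguerreCoeff, pow_zero, one_mul, Nat.cast_zero, add_zero, Nat.sub_zero, this]
  ring

lemma laguerreCoeff_succ_succ (α : ℂ) {n k : ℕ} (hk : k < n) :
    laguerreCoeff α (n + 1) (k + 1) = laguerreCoeff α n (k + 1) - laguerreCoeff α n k := by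
  obtain ⟨r, rfl⟩ := Nat.exists_eq_add_of_lt hk
  have := negBinomCoeff_sub_one_succ (α + 1 + (k + 1 : ℕ)) r
  rw [Nat.cast_succ, ← add_assoc, add_sub_cancel_right] at this
  simp only [laguerreCoeff, show k + r + 1 + 1 - (k + 1) = r + 1 by omega,
    show k + r + 1 - (k + 1) = r by omega, show k + r + 1 - k = r + 1 by omega, Nat.cast_succ,
    ← add_assoc, this, pow_succ]
  ring

lemma laguerreCoeff_self (α : ℂ) (n : ℕ) : laguerreCoeff α n n = (-1) ^ n := by
  simp [laguerreCoeff]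

/-- The Laplace transform of polynomials, `x ^ k ↦ k! / s ^ (k + 1)`, in the variable
`X = 1 / s`. -/
noncomputable def laplace : ℂ[X] →ₗ[ℂ] ℂ[X] := lsum fun k => (k ! : ℂ) • monomial (k + 1)

lemma laplace_monomial (k : ℕ) (c : ℂ) : laplace (monomial k c) = monomial (k + 1) (k ! * c) := by
  simp [laplace, sum_monomial_index, smul_monomial]

lemma laplace_C_mul_X_pow (c : ℂ) (k : ℕ) : laplace (C c * X ^ k) = C (k ! * c) * X ^ (k + 1) := by
  simp only [C_mul_X_pow_eq_monomial, laplace_monomial]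

lemma laplace_eq_sum (P : ℂ[X]) : laplace P = P.sum fun k c => C (k ! * c) * X ^ (k + 1) := by
  simp only [laplace, lsum_apply, sum_def, LinearMap.smul_apply, smul_monomial, smul_eq_mul,
    C_mul_X_pow_eq_monomial]

lemma laplace_C_mul (c : ℂ) (P : ℂ[X]) : laplace (C c * P) = C c * laplace P := by
  rw [← smul_eq_C_mul, map_smul, smul_eq_C_mul]

lemma coeff_laplace_succ (P : ℂ[X]) (k : ℕ) : (laplace P).coeff (k + 1) = k ! * P.coeff k := by
  induction P using Polynomial.induction_on' with
  | add P Q hP hQ => simp [hP, hQ, mul_add]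
  | monomial i c => by_cases h : i = k <;> simp [laplace_monomial, coeff_monomial, h]

lemma laplace_injective : Function.Injective laplace := by
  refine (injective_iff_map_eq_zero laplace).mpr fun P hP => Polynomial.ext fun k => ?_
  simpa [hP, factorial_ne_zero] using (coeff_laplace_succ P k).symm

noncomputable def conv (P Q : ℂ[X]) : ℂ[X] :=
  P.sum fun i a => Q.sum fun j b => C (a * b * (i ! * j ! / (i + j + 1) !)) * X ^ (i + j + 1)

lemma laplace_conv (P Q : ℂ[X]) : laplace (conv P Q) = laplace P * laplace Q := by
  simp only [conv, laplace_eq_sum P, laplace_eq_sum Q, sum_def, Finset.sum_mul_sum, map_sum,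
    laplace_C_mul_X_pow]
  refine Finset.sum_congr rfl fun i _ => Finset.sum_congr rfl fun j _ => ?_
  have := factorial_ne_zero (i + j + 1)
  rw [mul_mul_mul_comm, ← C_mul, ← pow_add, show i + 1 + (j + 1) = i + j + 1 + 1 by ring]
  congr 2
  field_simp

lemma integral_sub_pow_mul_pow (i j : ℕ) (x : ℝ) :
    ∫ t in (0 : ℝ)..x, (x - t) ^ i * t ^ j = i ! * j ! / (i + j + 1) ! * x ^ (i + j + 1) := by
  induction i generalizing j with
  | zero =>
    have := (j.cast_add_one_pos (α := ℝ)).ne'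
    simp only [pow_zero, one_mul, integral_pow, zero_add, factorial_succ]
    push_cast
    field_simp
    ring
  | succ i ih =>
    have hu : ∀ t ∈ Set.uIcc 0 x,
        HasDerivAt (fun t : ℝ => (x - t) ^ (i + 1)) (-((i + 1 : ℝ) * (x - t) ^ i)) t := by
      intro t _
      simpa using ((hasDerivAt_id t).const_sub x).fun_pow (i + 1)
    have hv : ∀ t ∈ Set.uIcc 0 x,
        HasDerivAt (fun t : ℝ => t ^ (j + 1) / (j + 1)) (t ^ j) t := by
      intro t _
      have := (j.cast_add_one_pos (α := ℝ)).ne'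
      simpa [mul_div_cancel_left₀, this] using (hasDerivAt_pow (j + 1) t).div_const ((j : ℝ) + 1)
    rw [intervalIntegral.integral_mul_deriv_eq_deriv_mul hu hv
      ((by fun_prop : Continuous _).intervalIntegrable _ _)
      ((by fun_prop : Continuous _).intervalIntegrable _ _)]
    have hparts : ∫ t in (0 : ℝ)..x, -((i + 1 : ℝ) * (x - t) ^ i) * (t ^ (j + 1) / (j + 1))
        = -((i + 1) / (j + 1)) * ∫ t in (0 : ℝ)..x, (x - t) ^ i * t ^ (j + 1) := by
      rw [← intervalIntegral.integral_const_mul]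
      congr 1 with t
      ring
    rw [hparts, ih, sub_self, zero_pow i.succ_ne_zero, zero_pow j.succ_ne_zero,
      show i + (j + 1) + 1 = i + j + 1 + 1 by ring, show i + 1 + j + 1 = i + j + 1 + 1 by ring,
      factorial_succ (i + j + 1), factorial_succ i, factorial_succ j]
    have := (j.cast_add_one_pos (α := ℝ)).ne'
    push_cast
    field_simp
    ring

lemma integral_ofReal_sub_pow_mul_pow (i j : ℕ) (x : ℝ) :
    ∫ t in (0 : ℝ)..x, ((x : ℂ) - t) ^ i * (t : ℂ) ^ j
      = i ! * j ! / (i + j + 1) ! * (x : ℂ) ^ (i + j + 1) := by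
  have := congrArg Complex.ofReal (integral_sub_pow_mul_pow i j x)
  push_cast [← intervalIntegral.integral_ofReal] at this
  exact this

lemma eval_conv (P Q : ℂ[X]) (x : ℝ) :
    (conv P Q).eval (x : ℂ) = ∫ t in (0 : ℝ)..x, P.eval ((x : ℂ) - t) * Q.eval (t : ℂ) := by
  simp only [conv, sum_def, eval_finsetSum, eval_mul, eval_C, eval_pow, eval_X]
  simp only [eval_eq_sum, sum_def, Finset.sum_mul_sum]
  rw [intervalIntegral.integral_finsetSum fun i _ =>
    (by fun_prop : Continuous _).intervalIntegrable _ _]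
  refine Finset.sum_congr rfl fun i _ => ?_
  rw [intervalIntegral.integral_finsetSum fun j _ =>
    (by fun_prop : Continuous _).intervalIntegrable _ _]
  refine Finset.sum_congr rfl fun j _ => ?_
  rw [mul_assoc, ← integral_ofReal_sub_pow_mul_pow, ← intervalIntegral.integral_const_mul]
  congr 1 with t
  ring

noncomputable def revPartialSum (a : ℕ → ℂ) (n : ℕ) : ℂ[X] :=
  ∑ i ∈ Finset.range (n + 1), C (a i) * X ^ (n - i)

section RevPartialSum

variable {a b : ℕ → ℂ}

@[simp]
lemma revPartialSum_zero (a : ℕ → ℂ) : revPartialSum a 0 = C (a 0) := by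
  simp [revPartialSum]

lemma revPartialSum_succ (a : ℕ → ℂ) (n : ℕ) :
    revPartialSum a (n + 1) = X * revPartialSum a n + C (a (n + 1)) := by
  rw [revPartialSum, Finset.sum_range_succ, revPartialSum, Finset.mul_sum, Nat.sub_self, pow_zero,
    mul_one]
  congr 1
  refine Finset.sum_congr rfl fun i hi => ?_
  rw [Nat.sub_add_comm (Nat.lt_succ_iff.mp (Finset.mem_range.mp hi)), pow_succ]
  ring

lemma sum_C_mul_revPartialSum_succ {ι : Type*} (s : Finset ι) (c : ι → ℂ) (f : ι → ℕ) :
    ∑ i ∈ s, C (c i) * revPartialSum a (f i + 1)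
      = X * ∑ i ∈ s, C (c i) * revPartialSum a (f i) + C (∑ i ∈ s, c i * a (f i + 1)) := by
  simp only [revPartialSum_succ, Finset.mul_sum, map_sum, C_mul, ← Finset.sum_add_distrib]
  exact Finset.sum_congr rfl fun i _ => by ring

lemma sum_range_skew_eq_neg_mul (ha : a 0 = 1) (hb0 : b 0 = 1)
    (hb : ∀ r, b (r + 1) = a (r + 1) - a r) (m n : ℕ) :
    ∑ i ∈ Finset.range (m + 1), (b (m + n + 2 - i) * a i - b i * a (m + n + 2 - i))
      = -(a m * a (n + 1)) := by
  have htelescope : ∀ i ∈ Finset.range m,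
      b (m + n + 2 - (i + 1)) * a (i + 1) - b (i + 1) * a (m + n + 2 - (i + 1))
        = a i * a (m + n + 1 - i) - a (i + 1) * a (m + n + 1 - (i + 1)) := by
    intro i hi
    have hi := Finset.mem_range.mp hi
    rw [show m + n + 2 - (i + 1) = m + n - i + 1 by omega, hb, hb,
      show m + n + 1 - i = m + n - i + 1 by omega, show m + n + 1 - (i + 1) = m + n - i by omega]
    ring
  rw [Finset.sum_range_succ', Finset.sum_congr rfl htelescope,
    Finset.sum_range_sub' (fun i => a i * a (m + n + 1 - i)), Nat.sub_zero, Nat.sub_zero,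
    hb (m + n + 1), hb0, ha, show m + n + 1 - m = n + 1 by omega]
  ring

theorem one_sub_X_mul_revPartialSum_mul (ha : a 0 = 1) (hb0 : b 0 = 1)
    (hb : ∀ r, b (r + 1) = a (r + 1) - a r) (m n : ℕ) :
    (1 - X) * revPartialSum a m * revPartialSum a n
      = ∑ j ∈ Finset.range m, C (b (m + n + 1 - j)) * revPartialSum a j
        + C (a (n + 1)) * revPartialSum a m + C (a m) * revPartialSum a n
        - ∑ i ∈ Finset.range (m + 1), C (b i) * revPartialSum a (m + n + 1 - i) := by
  induction m with
  | zero =>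
    rw [Finset.sum_range_zero, Finset.sum_range_one, show 0 + n + 1 - 0 = n + 1 by omega,
      revPartialSum_succ, revPartialSum_zero, ha, hb0, map_one]
    ring
  | succ m ih =>
    have hleft : ∑ j ∈ Finset.range (m + 1), C (b (m + 1 + n + 1 - j)) * revPartialSum a j
        = X * ∑ j ∈ Finset.range m, C (b (m + n + 1 - j)) * revPartialSum a j
          + C (∑ j ∈ Finset.range m, b (m + n + 1 - j) * a (j + 1)) + C (b (m + n + 2)) := by
      rw [Finset.sum_range_succ', ← sum_C_mul_revPartialSum_succ, revPartialSum_zero, ha, map_one,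
        mul_one, show m + 1 + n + 1 - 0 = m + n + 2 by omega]
      congr 1
      exact Finset.sum_congr rfl fun j _ => by
        rw [show m + 1 + n + 1 - (j + 1) = m + n + 1 - j by omega]
    have hright : ∑ i ∈ Finset.range (m + 1 + 1), C (b i) * revPartialSum a (m + 1 + n + 1 - i)
        = X * ∑ i ∈ Finset.range (m + 1), C (b i) * revPartialSum a (m + n + 1 - i)
          + C (∑ i ∈ Finset.range (m + 1), b i * a (m + n + 2 - i))
          + C (b (m + 1)) * revPartialSum a (n + 1) := by
      have hidx : ∀ i ∈ Finset.range (m + 1), m + 1 + n + 1 - i = m + n + 1 - i + 1 := by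
        intro i hi
        have := Finset.mem_range.mp hi
        omega
      rw [Finset.sum_range_succ, show m + 1 + n + 1 - (m + 1) = n + 1 by omega,
        Finset.sum_congr rfl fun i hi => by rw [hidx i hi], sum_C_mul_revPartialSum_succ]
      congr 3
      exact Finset.sum_congr rfl fun i hi => by
        rw [← hidx i hi, show m + 1 + n + 1 = m + n + 2 by omega]
    have hscalar : b (m + n + 2) + ∑ j ∈ Finset.range m, b (m + n + 1 - j) * a (j + 1)
        - ∑ i ∈ Finset.range (m + 1), b i * a (m + n + 2 - i) = -(a m * a (n + 1)) := by
      rw [← sum_range_skew_eq_neg_mul ha hb0 hb m n, Finset.sum_sub_distrib,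
        Finset.sum_range_succ' (fun i => b (m + n + 2 - i) * a i), ha, mul_one, Nat.sub_zero,
        add_comm (b _)]
      congr 2
      exact Finset.sum_congr rfl fun j _ => by
        rw [show m + n + 2 - (j + 1) = m + n + 1 - j by omega]
    have hscalarC := congrArg C hscalar
    simp only [map_add, map_sub, map_neg, map_mul] at hscalarC
    have hbC := congrArg C (hb m)
    rw [map_sub] at hbC
    rw [hleft, hright, revPartialSum_succ a m, revPartialSum_succ a n]
    linear_combination X * ih - hscalarC + (X * revPartialSum a n + C (a (n + 1))) * hbC

end RevPartialSum

lemma laplace_laguerreL_eq_sum {α : ℂ} (hα : -1 < α.re) (n : ℕ) :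
    laplace (laguerreL α n)
      = ∑ k ∈ Finset.range (n + 1), C (laguerreCoeff α n k) * X ^ (k + 1) := by
  simp only [laguerreL_eq_sum hα, map_sum, laplace_C_mul_X_pow]
  exact Finset.sum_congr rfl fun k _ => by
    rw [mul_div_cancel₀ _ (Nat.cast_ne_zero.mpr k.factorial_ne_zero)]

lemma sum_laguerreCoeff_succ (α : ℂ) (n : ℕ) :
    ∑ k ∈ Finset.range (n + 2), C (laguerreCoeff α (n + 1) k) * X ^ (k + 1)
      = (1 - X) * ∑ k ∈ Finset.range (n + 1), C (laguerreCoeff α n k) * X ^ (k + 1)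
        + C (negBinomCoeff α (n + 1)) * X := by
  have hmid : ∀ k ∈ Finset.range n,
      C (laguerreCoeff α (n + 1) (k + 1)) * X ^ (k + 1 + 1)
        = C (laguerreCoeff α n (k + 1)) * X ^ (k + 1 + 1)
          - X * (C (laguerreCoeff α n k) * X ^ (k + 1)) := fun k hk => by
    rw [laguerreCoeff_succ_succ α (Finset.mem_range.mp hk), C_sub]
    ring
  have hfirst := Finset.sum_range_succ' (fun k => C (laguerreCoeff α n k) * X ^ (k + 1)) n
  have hlast := Finset.sum_range_succ (fun k => C (laguerreCoeff α n k) * X ^ (k + 1)) n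
  conv_lhs => rw [Finset.sum_range_succ, Finset.sum_range_succ', Finset.sum_congr rfl hmid,
    Finset.sum_sub_distrib, ← Finset.mul_sum]
  simp only [laguerreCoeff_succ_zero, laguerreCoeff_self, C_add, map_pow, map_neg, map_one]
    at hfirst hlast ⊢
  linear_combination X * hlast - hfirst

theorem laplace_laguerreL {α : ℂ} (hα : -1 < α.re) (n : ℕ) :
    laplace (laguerreL α n) = X * (revPartialSum (negBinomCoeff α) n).comp (1 - X) := by
  rw [laplace_laguerreL_eq_sum hα]
  induction n with
  | zero => simp [laguerreCoeff]
  | succ n ih =>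
    rw [sum_laguerreCoeff_succ, ih, revPartialSum_succ, add_comp, mul_comp, X_comp, C_comp]
    ring

lemma sum_range_ite_lt {M : Type*} [AddCommMonoid M] {m N : ℕ} (h : m ≤ N) (f : ℕ → M) :
    ∑ j ∈ Finset.range N, (if j < m then f j else 0) = ∑ j ∈ Finset.range m, f j := by
  rw [← Finset.sum_filter]
  congr 1
  ext j
  simp only [Finset.mem_filter, Finset.mem_range]
  omega

noncomputable def convCoeff (α : ℂ) (m n j : ℕ) : ℂ :=
  (if j < m then negBinomCoeff (α - 1) (m + n + 1 - j) else 0)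
    + (if j = m then negBinomCoeff α (n + 1) else 0)
    + (if j = n then negBinomCoeff α m else 0)
    - (if n < j then negBinomCoeff (α - 1) (m + n + 1 - j) else 0)

lemma sum_convCoeff_mul_revPartialSum (α : ℂ) {m n : ℕ} (hmn : m ≤ n) :
    ∑ j ∈ Finset.range (m + n + 2), C (convCoeff α m n j) * revPartialSum (negBinomCoeff α) j
      = ∑ j ∈ Finset.range m,
            C (negBinomCoeff (α - 1) (m + n + 1 - j)) * revPartialSum (negBinomCoeff α) j
        + C (negBinomCoeff α (n + 1)) * revPartialSum (negBinomCoeff α) m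
        + C (negBinomCoeff α m) * revPartialSum (negBinomCoeff α) n
        - ∑ i ∈ Finset.range (m + 1),
            C (negBinomCoeff (α - 1) i) * revPartialSum (negBinomCoeff α) (m + n + 1 - i) := by
  have hreflect : ∑ j ∈ Finset.range (m + n + 2), (if n < j then
        C (negBinomCoeff (α - 1) (m + n + 1 - j)) * revPartialSum (negBinomCoeff α) j else 0)
      = ∑ i ∈ Finset.range (m + 1),
          C (negBinomCoeff (α - 1) i) * revPartialSum (negBinomCoeff α) (m + n + 1 - i) := by
    rw [← Finset.sum_range_reflect, ← sum_range_ite_lt (by omega : m + 1 ≤ m + n + 2)]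
    refine Finset.sum_congr rfl fun i hi => ?_
    have := Finset.mem_range.mp hi
    rw [show m + n + 2 - 1 - i = m + n + 1 - i by omega,
      show m + n + 1 - (m + n + 1 - i) = i by omega]
    exact if_congr (by omega) rfl rfl
  simp only [convCoeff, map_add, map_sub, add_mul, sub_mul, Finset.sum_add_distrib,
    Finset.sum_sub_distrib, apply_ite C, map_zero, ite_mul, zero_mul, hreflect,
    sum_range_ite_lt (by omega : m ≤ m + n + 2), Finset.sum_ite_eq', Finset.mem_range]
  simp only [show m < m + n + 2 by omega, show n < m + n + 2 by omega, if_true]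

theorem conv_laguerreL {α : ℂ} (hα : -1 < α.re) {m n : ℕ} (hmn : m ≤ n) :
    conv (laguerreL α m) (laguerreL α n)
      = ∑ j ∈ Finset.range (m + n + 2), C (convCoeff α m n j) * laguerreL α j := by
  have hcore := congrArg (compRingHom (1 - X)) (one_sub_X_mul_revPartialSum_mul
    (negBinomCoeff_zero α) (negBinomCoeff_zero (α - 1)) (negBinomCoeff_sub_one_succ α) m n)
  rw [← sum_convCoeff_mul_revPartialSum α hmn, map_sum] at hcore
  simp only [map_mul, map_sub, map_one, coe_compRingHom_apply, X_comp, C_comp,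
    sub_sub_cancel] at hcore
  apply laplace_injective
  simp only [laplace_conv, map_sum, laplace_C_mul, laplace_laguerreL hα]
  calc X * (revPartialSum (negBinomCoeff α) m).comp (1 - X)
        * (X * (revPartialSum (negBinomCoeff α) n).comp (1 - X))
      = X * (X * (revPartialSum (negBinomCoeff α) m).comp (1 - X)
        * (revPartialSum (negBinomCoeff α) n).comp (1 - X)) := by ring
    _ = _ := by
      rw [hcore, Finset.mul_sum]
      exact Finset.sum_congr rfl fun j _ => by ring

lemma degree_laguerreL {α : ℂ} (hα : -1 < α.re) (n : ℕ) : (laguerreL α n).degree = n := by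
  rw [laguerreL_eq_sum hα]
  refine degree_eq_of_le_of_coeff_ne_zero
    ((degree_sum_le _ _).trans (Finset.sup_le fun k hk => ?_)) ?_
  · exact (degree_C_mul_X_pow_le _ _).trans
      (by exact_mod_cast Nat.lt_succ_iff.mp (Finset.mem_range.mp hk))
  · simp [finsetSum_coeff, laguerreCoeff_self, Nat.factorial_ne_zero]

noncomputable def laguerreSequence {α : ℂ} (hα : -1 < α.re) : Polynomial.Sequence ℂ :=
  ⟨laguerreL α, degree_laguerreL hα⟩

lemma eq_of_sum_C_mul_laguerreL_eq {α : ℂ} (hα : -1 < α.re) {N : ℕ} {c d : ℕ → ℂ}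
    (h : ∑ j ∈ Finset.range N, C (c j) * laguerreL α j
      = ∑ j ∈ Finset.range N, C (d j) * laguerreL α j) :
    ∀ j < N, c j = d j := by
  intro j hj
  refine sub_eq_zero.mp (linearIndependent_iff'.mp (laguerreSequence hα).linearIndependent
    (Finset.range N) (c - d) ?_ j (Finset.mem_range.mpr hj))
  simp only [Pi.sub_apply, sub_smul, Finset.sum_sub_distrib, smul_eq_C_mul]
  exact sub_eq_zero.mpr h

end LaguerreConvolution

open LaguerreConvolution

theorem stmt19_general (α : ℂ) (hα : -1 < α.re)
    (m n : ℕ) (hmn : m ≤ n)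
    (ρ : ℕ → ℂ)
    (hρ : ∀ x : ℝ,
      (∫ t in (0 : ℝ)..x,
          (laguerreL α m).eval ((x : ℂ) - (t : ℂ)) * (laguerreL α n).eval (t : ℂ)) =
        ∑ j ∈ Finset.range (m + n + 2), ρ j * (laguerreL α j).eval (x : ℂ)) :
    (m + 1 ≤ n →
      (∀ j : ℕ, n + 1 ≤ j → j ≤ m + n + 1 →
        ρ j = -(poch (α - 1) (m + n + 1 - j) / ((m + n + 1 - j).factorial : ℂ))) ∧
      ρ n = poch α m / (m.factorial : ℂ) ∧
      (∀ j : ℕ, m + 1 ≤ j → j + 1 ≤ n → ρ j = 0) ∧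
      ρ m = poch α (n + 1) / ((n + 1).factorial : ℂ) ∧
      (∀ j : ℕ, j + 1 ≤ m →
        ρ j = poch (α - 1) (m + n + 1 - j) / ((m + n + 1 - j).factorial : ℂ))) ∧
    (n = m →
      (∀ j : ℕ, m + 1 ≤ j → j ≤ 2 * m + 1 →
        ρ j = -(poch (α - 1) (2 * m + 1 - j) / ((2 * m + 1 - j).factorial : ℂ))) ∧
      ρ m = poch α (m + 1) / ((m + 1).factorial : ℂ) + poch α m / (m.factorial : ℂ) ∧
      (∀ j : ℕ, j + 1 ≤ m →
        ρ j = poch (α - 1) (2 * m + 1 - j) / ((2 * m + 1 - j).factorial : ℂ))) := by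
  have hpoly : conv (laguerreL α m) (laguerreL α n)
      = ∑ j ∈ Finset.range (m + n + 2), C (ρ j) * laguerreL α j := by
    refine eq_of_infinite_eval_eq _ _ <| Set.Infinite.mono ?_ <|
      Set.infinite_range_of_injective Complex.ofReal_injective
    rintro _ ⟨x, rfl⟩
    simp [eval_conv, hρ x, eval_finsetSum]
  have hcoeff := eq_of_sum_C_mul_laguerreL_eq hα (hpoly.symm.trans (conv_laguerreL hα hmn))
  constructor
  · intro hlt
    refine ⟨fun j h₁ h₂ => ?_, ?_, fun j h₁ h₂ => ?_, ?_, fun j h₁ => ?_⟩ <;>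
      rw [hcoeff _ (by omega), convCoeff] <;> split_ifs <;> first | omega | simp [negBinomCoeff]
  · rintro rfl
    refine ⟨fun j h₁ h₂ => ?_, ?_, fun j h₁ => ?_⟩ <;>
      rw [hcoeff _ (by omega), convCoeff, ← two_mul] <;> split_ifs <;>
      first | omega | simp [negBinomCoeff]

/-- **Theorem (Laguerre convolution coefficients).**
Let `ℜ(α) > -1`, `m, n` positive with `n ≥ m`, and `ρ j` the coefficients of
`∫_0^x L_m^{(α)}(x-t) L_n^{(α)}(t) dt = ∑_{j=0}^{m+n+1} ρ̂_j L_j^{(α)}(x)`.  When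
`n ≥ m+1`:
`ρ̂ j = -(α-1)_{m+n+1-j}/(m+n+1-j)!` for `n+1 ≤ j ≤ m+n+1`; `ρ̂ n = (α)_m/m!`;
`ρ̂ j = 0` for `m+1 ≤ j ≤ n-1`; `ρ̂ m = (α)_{n+1}/(n+1)!`; and
`ρ̂ j = (α-1)_{m+n+1-j}/(m+n+1-j)!` for `0 ≤ j ≤ m-1`.  When `n = m`:
`ρ̂ j = -(α-1)_{2m+1-j}/(2m+1-j)!` for `m+1 ≤ j ≤ 2m+1`;
`ρ̂ m = (α)_{m+1}/(m+1)! + (α)_m/m!`; and `ρ̂ j = (α-1)_{2m+1-j}/(2m+1-j)!` for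
`0 ≤ j ≤ m-1`. -/
theorem stmt19 (α : ℂ) (hα : -1 < α.re)
    (m n : ℕ) (hm : 0 < m) (hn : 0 < n) (hmn : m ≤ n)
    (ρ : ℕ → ℂ)
    (hρ : ∀ x : ℝ,
      (∫ t in (0 : ℝ)..x,
          (laguerreL α m).eval ((x : ℂ) - (t : ℂ)) * (laguerreL α n).eval (t : ℂ)) =
        ∑ j ∈ Finset.range (m + n + 2), ρ j * (laguerreL α j).eval (x : ℂ)) :
    (m + 1 ≤ n →
      (∀ j : ℕ, n + 1 ≤ j → j ≤ m + n + 1 →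
        ρ j = -(poch (α - 1) (m + n + 1 - j) / ((m + n + 1 - j).factorial : ℂ))) ∧
      ρ n = poch α m / (m.factorial : ℂ) ∧
      (∀ j : ℕ, m + 1 ≤ j → j + 1 ≤ n → ρ j = 0) ∧
      ρ m = poch α (n + 1) / ((n + 1).factorial : ℂ) ∧
      (∀ j : ℕ, j + 1 ≤ m →
        ρ j = poch (α - 1) (m + n + 1 - j) / ((m + n + 1 - j).factorial : ℂ))) ∧
    (n = m →
      (∀ j : ℕ, m + 1 ≤ j → j ≤ 2 * m + 1 →
        ρ j = -(poch (α - 1) (2 * m + 1 - j) / ((2 * m + 1 - j).factorial : ℂ))) ∧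
      ρ m = poch α (m + 1) / ((m + 1).factorial : ℂ) + poch α m / (m.factorial : ℂ) ∧
      (∀ j : ℕ, j + 1 ≤ m →
        ρ j = poch (α - 1) (2 * m + 1 - j) / ((2 * m + 1 - j).factorial : ℂ))) :=
  stmt19_general α hα m n hmn ρ hρ
end
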